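/- Let L be a regular language over a finite alphabet Σ, let a ∈ Σ and let k ∈ ℕ. Then a⁻¹(𝕃_k(L)) = 𝕃_k(a⁻¹(L)) ∪ ⋃_{b∈Σ∖{a}} 𝕃_{k−1}(b⁻¹(L)) ∪ 𝕃_{k−1}(L) ∪ a⁻¹(⋃_{b∈Σ} 𝕃_{k−1}(b⁻¹(L))). -/

import Mathlib

/-!
Quotient formula for the Levenshtein similarity operator.

`levDist u v` is the Levenshtein (edit) distance: the minimal number of
single-symbol insertions, deletions and substitutions transforming `u` into
`v` (Mathlib's `levenshtein` with the default cost structure, where every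
insertion/deletion costs `1` and substituting `a` by `b` costs `1` if `a ≠ b`
and `0` otherwise).
For `k ∈ ℕ ∪ {⊥}` (encoded by `Option ℕ`), `levBall k L` is the language
`𝕃_k(L)` of all words at Levenshtein distance at most `k` from some word of
`L` (with `𝕃_⊥(L) = ∅`).  `predO k` is `k - 1`, where `0 - 1 = ⊥`.
`leftQuot a L` is the left quotient `a⁻¹(L)`.  Unions of languages are
expressed with the lattice operations `⊔`/`⨆` on `Language σ`.
-/

/-- The left quotient `a⁻¹(L) = {w | aw ∈ L}` of a language w.r.t. a symbol. -/
def leftQuot {σ : Type} (a : σ) (L : Language σ) : Language σ :=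
  {w | a :: w ∈ L}

/-- The cost structure of Levenshtein distance (removed from Mathlib; restored here
with its old meaning). -/
structure Levenshtein.Cost (α β δ : Type) where
  delete : α → δ
  insert : β → δ
  substitute : α → β → δ

/-- The default cost structure: insertions/deletions cost `1`, substitution costs
`0` for equal symbols and `1` otherwise (as in the old Mathlib). -/
def Levenshtein.defaultCost {α : Type} [DecidableEq α] : Levenshtein.Cost α α ℕ where
  delete _ := 1
  insert _ := 1
  substitute a b := if a = b then 0 else 1

/-- The Levenshtein distance w.r.t. a cost structure (old Mathlib's `levenshtein`,
spelled out by its defining recursion). -/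
def levenshtein {α β δ : Type} [AddMonoid δ] [Min δ] (C : Levenshtein.Cost α β δ) :
    List α → List β → δ
  | [], ys => (ys.map C.insert).sum
  | x :: xs, [] => C.delete x + levenshtein C xs []
  | x :: xs, y :: ys =>
    min (C.delete x + levenshtein C xs (y :: ys))
      (min (C.insert y + levenshtein C (x :: xs) ys)
        (C.substitute x y + levenshtein C xs ys))

/-- The Levenshtein (edit) distance of two words. -/
def levDist {σ : Type} [DecidableEq σ] (u v : List σ) : ℕ :=
  levenshtein Levenshtein.defaultCost u v

/-- `𝕃_k(L)`: the set of words at Levenshtein distance at most `k` from some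
word of `L`; the empty language when `k = ⊥`. -/
def levBall {σ : Type} [DecidableEq σ] (k : Option ℕ) (L : Language σ) : Language σ :=
  match k with
  | none => ⊥
  | some k => {w | ∃ u ∈ L, levDist w u ≤ k}

/-- `k - 1` on `ℕ ∪ {⊥}`: `0 - 1 = ⊥` and `⊥ - 1 = ⊥`. -/
def predO (k : Option ℕ) : Option ℕ :=
  k.bind fun n => if n = 0 then none else some (n - 1)

/-!
In an optimal edit of `a :: w` into a word `u ∈ L`, the leading `a` is either kept (then `u = a :: v`
and `w` is within `k` of `v ∈ a⁻¹(L)`), substituted by some `b ≠ a` (then `w` is within `k - 1` of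
`b⁻¹(L)`), deleted (then `w` is within `k - 1` of `L`), or the script starts by inserting the first
letter `b` of `u` (then `a :: w` is within `k - 1` of `b⁻¹(L)`). Conversely each of these situations
costs at most `k` in total, which is read off the defining recursion of `levenshtein`.
-/

theorem Language.mem_sup {σ : Type} {A B : Language σ} {w : List σ} :
    w ∈ A ⊔ B ↔ w ∈ A ∨ w ∈ B := Iff.rfl

theorem mem_leftQuot {σ : Type} {a : σ} {L : Language σ} {w : List σ} :
    w ∈ leftQuot a L ↔ a :: w ∈ L := Iff.rfl

section LevDist

variable {σ : Type} [DecidableEq σ]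

theorem levDist_cons_nil (x : σ) (xs : List σ) :
    levDist (x :: xs) [] = 1 + levDist xs [] := by
  rw [levDist, levenshtein]; rfl

theorem levDist_cons_cons (x y : σ) (xs ys : List σ) :
    levDist (x :: xs) (y :: ys) =
      min (1 + levDist xs (y :: ys))
        (min (1 + levDist (x :: xs) ys) ((if x = y then 0 else 1) + levDist xs ys)) := by
  rw [levDist, levenshtein]; rfl

theorem levDist_cons_le_add_one (a : σ) (w u : List σ) :
    levDist (a :: w) u ≤ levDist w u + 1 := by
  cases u with
  | nil => rw [levDist_cons_nil]; omega
  | cons c v => rw [levDist_cons_cons]; omega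

theorem levDist_cons_cons_le_insert (a b : σ) (w v : List σ) :
    levDist (a :: w) (b :: v) ≤ levDist (a :: w) v + 1 := by
  rw [levDist_cons_cons]; omega

theorem levDist_cons_cons_le_substitute (a b : σ) (w v : List σ) :
    levDist (a :: w) (b :: v) ≤ levDist w v + if a = b then 0 else 1 := by
  rw [levDist_cons_cons]; omega

theorem levDist_cons_self_le (a : σ) (w v : List σ) :
    levDist (a :: w) (a :: v) ≤ levDist w v := by
  simpa using levDist_cons_cons_le_substitute a a w v

theorem levDist_cons_le_cases {a : σ} {w u : List σ} {k : ℕ} (h : levDist (a :: w) u ≤ k) :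
    (0 < k ∧ levDist w u ≤ k - 1) ∨
      ∃ b v, u = b :: v ∧
        ((b = a ∧ levDist w v ≤ k) ∨ (b ≠ a ∧ 0 < k ∧ levDist w v ≤ k - 1) ∨
          (0 < k ∧ levDist (a :: w) v ≤ k - 1)) := by
  cases u with
  | nil => rw [levDist_cons_nil] at h; left; omega
  | cons b v =>
    rw [levDist_cons_cons, min_le_iff, min_le_iff] at h
    rcases h with hdel | hins | hsub
    · left; omega
    · exact Or.inr ⟨b, v, rfl, Or.inr (Or.inr (by omega))⟩
    · refine Or.inr ⟨b, v, rfl, ?_⟩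
      by_cases hba : b = a
      · subst hba; rw [if_pos rfl] at hsub; exact Or.inl ⟨rfl, by omega⟩
      · rw [if_neg (Ne.symm hba)] at hsub; exact Or.inr (Or.inl ⟨hba, by omega⟩)

theorem mem_levBall_some {k : ℕ} {L : Language σ} {w : List σ} :
    w ∈ levBall (some k) L ↔ ∃ u ∈ L, levDist w u ≤ k := Iff.rfl

theorem mem_levBall_predO_some {k : ℕ} {L : Language σ} {w : List σ} :
    w ∈ levBall (predO (some k)) L ↔ 0 < k ∧ ∃ u ∈ L, levDist w u ≤ k - 1 := by
  rcases Nat.eq_zero_or_pos k with rfl | hk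
  · simp only [predO, Option.bind_some, if_pos, levBall, lt_irrefl, false_and, iff_false]
    exact id
  · simp only [predO, Option.bind_some, if_neg hk.ne', hk, true_and]; rfl

theorem exists_mem_levDist_cons_le_iff (L : Language σ) (a : σ) (k : ℕ) (w : List σ) :
    (∃ u ∈ L, levDist (a :: w) u ≤ k) ↔
      (((∃ u, a :: u ∈ L ∧ levDist w u ≤ k) ∨
          ∃ b, b ≠ a ∧ 0 < k ∧ ∃ u, b :: u ∈ L ∧ levDist w u ≤ k - 1) ∨
        0 < k ∧ ∃ u ∈ L, levDist w u ≤ k - 1) ∨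
      ∃ b, 0 < k ∧ ∃ u, b :: u ∈ L ∧ levDist (a :: w) u ≤ k - 1 := by
  constructor
  · rintro ⟨u, hu, hdist⟩
    rcases levDist_cons_le_cases hdist with
      ⟨hk, hdel⟩ | ⟨b, v, rfl, ⟨rfl, hkeep⟩ | ⟨hba, hk, hsub⟩ | ⟨hk, hins⟩⟩
    · exact Or.inl (Or.inr ⟨hk, u, hu, hdel⟩)
    · exact Or.inl (Or.inl (Or.inl ⟨v, hu, hkeep⟩))
    · exact Or.inl (Or.inl (Or.inr ⟨b, hba, hk, v, hu, hsub⟩))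
    · exact Or.inr ⟨b, hk, v, hu, hins⟩
  · rintro (((⟨u, hu, hkeep⟩ | ⟨b, hba, hk, u, hu, hsub⟩) | ⟨hk, u, hu, hdel⟩) |
      ⟨b, hk, u, hu, hins⟩)
    · exact ⟨_, hu, (levDist_cons_self_le a w u).trans hkeep⟩
    · refine ⟨_, hu, (levDist_cons_cons_le_substitute a b w u).trans ?_⟩
      rw [if_neg (Ne.symm hba)]; omega
    · exact ⟨u, hu, by have := levDist_cons_le_add_one a w u; omega⟩
    · exact ⟨_, hu, by have := levDist_cons_cons_le_insert a b w u; omega⟩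

end LevDist

theorem quotient_levBall_general {σ : Type} [DecidableEq σ]
    (L : Language σ) (a : σ) (k : ℕ) :
    leftQuot a (levBall (some k) L) =
      levBall (some k) (leftQuot a L) ⊔
        (⨆ b ∈ {b : σ | b ≠ a}, levBall (predO (some k)) (leftQuot b L)) ⊔
        levBall (predO (some k)) L ⊔
        leftQuot a (⨆ b : σ, levBall (predO (some k)) (leftQuot b L)) := by
  ext w
  simp only [Language.mem_sup, Language.mem_iSup, mem_leftQuot, mem_levBall_some,
    mem_levBall_predO_some, Set.mem_ofPred_eq, exists_prop]
  exact exists_mem_levDist_cons_le_iff L a k w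

/-- **Quotient formula for the Levenshtein operator.**
For a regular language `L` over a finite alphabet `σ`, a symbol `a` and `k ∈ ℕ`:
`a⁻¹(𝕃_k(L)) = 𝕃_k(a⁻¹(L)) ∪ ⋃_{b ∈ Σ \ {a}} 𝕃_{k-1}(b⁻¹(L)) ∪ 𝕃_{k-1}(L)
               ∪ a⁻¹(⋃_{b ∈ Σ} 𝕃_{k-1}(b⁻¹(L)))`. -/
theorem quotient_levBall {σ : Type} [Fintype σ] [DecidableEq σ]
    (L : Language σ) (hL : L.IsRegular) (a : σ) (k : ℕ) :
    leftQuot a (levBall (some k) L) =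
      levBall (some k) (leftQuot a L) ⊔
        (⨆ b ∈ {b : σ | b ≠ a}, levBall (predO (some k)) (leftQuot b L)) ⊔
        levBall (predO (some k)) L ⊔
        leftQuot a (⨆ b : σ, levBall (predO (some k)) (leftQuot b L)) :=
  quotient_levBall_general L a k
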